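/- Let G=(N,L) be a directed graph with nonnegative link weights w, and let s,t be two nodes of G. Suppose every s–t path φ has a correlation coefficient satisfying 0 < ρ_min ≤ ρ(φ) ≤ 1. Let ψ be a conventional shortest path, i.e., an s–t path minimizing the uncorrelated cost U, and let ψ_opt be an s–t path minimizing the correlated cost C, with opt = C(ψ_opt). Then the correlated cost of the conventional shortest path satisfies C(ψ) ≤ (1/ρ_min) · opt. -/

import Mathlib

/-- A walk from `s` to `t` along the links of a directed graph with link set `E`,
recorded as its list of visited nodes. -/
def IsPath {V : Type*} (E : Set (V × V)) (s t : V) (p : List V) : Prop :=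
  p.head? = some s ∧ p.getLast? = some t ∧ p.Chain' (fun a b => (a, b) ∈ E)

/-- The uncorrelated cost of a path: the sum of the weights of its links. -/
def pathUCost {V : Type*} (w : V × V → ℝ) (p : List V) : ℝ :=
  ((p.zip p.tail).map w).sum

/-- The correlated (joint total) cost of a path under the deterministic
correlated model: its correlation coefficient times its uncorrelated cost. -/
def pathCCost {V : Type*} (ρ : List V → ℝ) (w : V × V → ℝ) (p : List V) : ℝ :=
  ρ p * pathUCost w p

section Costs

variable {V : Type*} {w : V × V → ℝ}

theorem pathUCost_nonneg (hw : ∀ e, 0 ≤ w e) (p : List V) : 0 ≤ pathUCost w p :=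
  List.sum_nonneg <| List.forall_mem_map.2 fun e _ => hw e

theorem pathCCost_le_pathUCost {ρ : List V → ℝ} {p : List V} (hw : ∀ e, 0 ≤ w e)
    (hρ : ρ p ≤ 1) : pathCCost ρ w p ≤ pathUCost w p :=
  mul_le_of_le_one_left (pathUCost_nonneg hw p) hρ

theorem mul_pathUCost_le_pathCCost {ρ : List V → ℝ} {p : List V} {c : ℝ}
    (hw : ∀ e, 0 ≤ w e) (hc : c ≤ ρ p) : c * pathUCost w p ≤ pathCCost ρ w p :=
  mul_le_mul_of_nonneg_right hc (pathUCost_nonneg hw p)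

end Costs

theorem conventional_shortest_path_decreasing_correlation_bound_general
    {V : Type*} (E : Set (V × V)) (w : V × V → ℝ) (hw : ∀ e, 0 ≤ w e)
    (s t : V) (ρ : List V → ℝ) (ρmin : ℝ) (hρmin : 0 < ρmin)
    (hρ : ∀ p, IsPath E s t p → ρmin ≤ ρ p ∧ ρ p ≤ 1)
    (ψ ψopt : List V)
    (hψ : IsPath E s t ψ) (hψopt : IsPath E s t ψopt)
    (hmin : ∀ p, IsPath E s t p → pathUCost w ψ ≤ pathUCost w p) :
    pathCCost ρ w ψ ≤ (1 / ρmin) * pathCCost ρ w ψopt := by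
  obtain ⟨-, hρψ_le_one⟩ := hρ ψ hψ
  obtain ⟨hρmin_le_ρopt, -⟩ := hρ ψopt hψopt
  calc pathCCost ρ w ψ ≤ pathUCost w ψ := pathCCost_le_pathUCost hw hρψ_le_one
    _ ≤ pathUCost w ψopt := hmin ψopt hψopt
    _ = (1 / ρmin) * (ρmin * pathUCost w ψopt) := by field_simp
    _ ≤ (1 / ρmin) * pathCCost ρ w ψopt := by
      gcongr
      exact mul_pathUCost_le_pathCCost hw hρmin_le_ρopt

/-- If every `s`–`t` path has correlation coefficient between `ρmin > 0` and `1`, then a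
conventional shortest path `ψ` has correlated cost at most `(1 / ρmin) · opt`. -/
theorem conventional_shortest_path_decreasing_correlation_bound
    {V : Type*} (E : Set (V × V)) (w : V × V → ℝ) (hw : ∀ e, 0 ≤ w e)
    (s t : V) (ρ : List V → ℝ) (ρmin : ℝ) (hρmin : 0 < ρmin)
    (hρ : ∀ p, IsPath E s t p → ρmin ≤ ρ p ∧ ρ p ≤ 1)
    (ψ ψopt : List V)
    (hψ : IsPath E s t ψ) (hψopt : IsPath E s t ψopt)
    (hmin : ∀ p, IsPath E s t p → pathUCost w ψ ≤ pathUCost w p)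
    (hoptmin : ∀ p, IsPath E s t p → pathCCost ρ w ψopt ≤ pathCCost ρ w p) :
    pathCCost ρ w ψ ≤ (1 / ρmin) * pathCCost ρ w ψopt :=
  conventional_shortest_path_decreasing_correlation_bound_general E w hw s t ρ ρmin hρmin hρ ψ ψopt
    hψ hψopt hmin
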